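/- arXiv:1103.3858 — 2 statements merged into one kernel-verified Lean document; each statement's English description precedes it below -/
import Mathlib

section
/- If the bases of a hereditary family H have a common element x and A₁ = ... = A_k = H⟨x⟩, then A₁,...,A_k are cross-intersecting with Σ|A_i| = k·|H|/2 and Π|A_i| = (|H|/2)^k; i.e., the bounds Σ|A_i| ≤ k|H|/2 and Π|A_i| ≤ (|H|/2)^k are attained. -/
/-! If every base of the hereditary family `H` contains `x`, then `A ↦ insert x A` maps the
members of `H` avoiding `x` into `H`, and it is inverse to `A ↦ A.erase x` on the star `H⟨x⟩`.
So exactly half of `H` contains `x`, and `k` copies of the star, which pairwise meet in `x`,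
attain both bounds. -/

open Finset

namespace Finset

variable {α : Type*} [DecidableEq α] {H : Finset (Finset α)} {x : α}

theorem insert_mem_of_forall_maximal_mem (hH : IsLowerSet (H : Set (Finset α)))
    (hx : ∀ B, Maximal (· ∈ H) B → x ∈ B) {A : Finset α} (hA : A ∈ H) : insert x A ∈ H := by
  obtain ⟨B, hAB, hB⟩ := H.exists_le_maximal hA
  exact hH (insert_subset (hx B hB) hAB) hB.prop

theorem card_filter_mem_eq_card_filter_notMem (hH : IsLowerSet (H : Set (Finset α)))
    (hins : ∀ A ∈ H, insert x A ∈ H) :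
    #(H.filter (x ∈ ·)) = #(H.filter (x ∉ ·)) := by
  refine card_nbij' (·.erase x) (insert x) (fun A hA => ?_) (fun A hA => ?_)
    (fun A hA => insert_erase (mem_filter.mp hA).2) (fun A hA => erase_insert (mem_filter.mp hA).2)
  · exact mem_filter.mpr ⟨hH (erase_subset x A) (mem_filter.mp hA).1, notMem_erase x A⟩
  · exact mem_filter.mpr ⟨hins A (mem_filter.mp hA).1, mem_insert_self x A⟩

theorem two_mul_card_filter_mem (hH : IsLowerSet (H : Set (Finset α)))
    (hins : ∀ A ∈ H, insert x A ∈ H) : 2 * #(H.filter (x ∈ ·)) = #H := by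
  have hsplit := card_filter_add_card_filter_not (s := H) (p := (x ∈ ·))
  rw [← card_filter_mem_eq_card_filter_notMem hH hins] at hsplit
  omega

end Finset

theorem bounds_attained_by_star {α : Type*} [DecidableEq α]
    (H : Finset (Finset α)) (x : α) (k : ℕ)
    (hH : ∀ A ∈ H, ∀ B ⊆ A, B ∈ H)
    (hx : ∀ B ∈ H, (∀ C ∈ H, B ⊆ C → B = C) → x ∈ B) :
    (∀ i j : Fin k, i ≠ j →
        ∀ A ∈ H.filter (fun A => x ∈ A), ∀ B ∈ H.filter (fun A => x ∈ A),
          (A ∩ B).Nonempty) ∧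
    2 * ∑ _i : Fin k, (H.filter (fun A => x ∈ A)).card = k * H.card ∧
    ∏ _i : Fin k, ((H.filter (fun A => x ∈ A)).card : ℝ)
      = ((H.card : ℝ) / 2) ^ k := by
  have hlower : IsLowerSet (H : Set (Finset α)) := fun A B hBA hA => hH A hA B hBA
  have hins : ∀ A ∈ H, insert x A ∈ H := fun A =>
    insert_mem_of_forall_maximal_mem hlower
      fun B hB => hx B hB.prop fun C hC hBC => hB.eq_of_le hC hBC
  have hhalf := two_mul_card_filter_mem hlower hins
  have hhalf_real : ((H.filter (x ∈ ·)).card : ℝ) = (H.card : ℝ) / 2 := by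
    rw [← hhalf]
    push_cast
    ring
  refine ⟨fun _ _ _ A hA B hB => ⟨x, mem_inter.mpr ⟨(mem_filter.mp hA).2, (mem_filter.mp hB).2⟩⟩,
    ?_, ?_⟩
  · rw [sum_const, card_univ, Fintype.card_fin, smul_eq_mul, mul_left_comm, hhalf]
  · rw [prod_const, card_univ, Fintype.card_fin, hhalf_real]
end

section
/- Let A ⊆ 2^[n] and B = Δ_{i,j}(A) for distinct i, j ∈ [n]. If B ∈ B*, then δ_{i,j}(B) ∈ B*. -/
open Finset

variable {n : ℕ}

def delta {α : Type*} [DecidableEq α] (i j : α) (A : Finset α) : Finset α :=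
  if j ∈ A ∧ i ∉ A then insert i (A.erase j) else A

def compFam {α : Type*} [DecidableEq α] (i j : α) (𝒜 : Finset (Finset α)) :
    Finset (Finset α) :=
  𝒜.filter (fun A => delta i j A ∈ 𝒜) ∪
    (𝒜.filter (fun A => delta i j A ∉ 𝒜)).image (delta i j)

/-- `𝒜* `: the members of `𝒜` intersecting every member of `𝒜`. -/
def starPart {α : Type*} [DecidableEq α] (𝒜 : Finset (Finset α)) :
    Finset (Finset α) :=
  𝒜.filter (fun A => ∀ B ∈ 𝒜, (A ∩ B).Nonempty)

lemma delta_idem {α : Type*} [DecidableEq α] {i j : α} (hij : i ≠ j) (A : Finset α) :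
    delta i j (delta i j A) = delta i j A := by
  by_cases h : j ∈ A ∧ i ∉ A
  · simp [delta, h]
  · simp [delta, h]

lemma compFam_delta_mem {α : Type*} [DecidableEq α] {i j : α} (hij : i ≠ j)
    {𝒜 : Finset (Finset α)} {B : Finset α} (hB : B ∈ compFam i j 𝒜) :
    delta i j B ∈ compFam i j 𝒜 := by
  rw [compFam, mem_union] at hB ⊢
  rcases hB with hB | hB
  · rw [mem_filter] at hB
    left
    rw [mem_filter, delta_idem hij]
    exact ⟨hB.2, hB.2⟩
  · simp only [mem_image, mem_filter] at hB
    obtain ⟨A, hA, rfl⟩ := hB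
    rw [delta_idem hij]
    right
    simp only [mem_image, mem_filter]
    exact ⟨A, hA, rfl⟩

theorem compression_star_closed (i j : Fin n) (hij : i ≠ j)
    (𝒜 : Finset (Finset (Fin n))) (B : Finset (Fin n))
    (hB : B ∈ starPart (compFam i j 𝒜)) :
    delta i j B ∈ starPart (compFam i j 𝒜) := by
  simp only [starPart, mem_filter] at hB ⊢
  obtain ⟨hBmem, hBint⟩ := hB
  refine ⟨compFam_delta_mem hij hBmem, ?_⟩
  by_cases hc : j ∈ B ∧ i ∉ B
  · -- δ B = insert i (B.erase j)
    have hδ : delta i j B = insert i (B.erase j) := by rw [delta, if_pos hc]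
    intro C hC
    by_contra hempty
    rw [not_nonempty_iff_eq_empty] at hempty
    have hiC : i ∉ C := by
      intro hi
      have : i ∈ delta i j B ∩ C := by
        rw [hδ]; exact mem_inter.2 ⟨mem_insert_self _ _, hi⟩
      simp [hempty] at this
    have hsub : ∀ x ∈ B ∩ C, x = j := by
      intro x hx
      by_contra hxj
      rw [mem_inter] at hx
      have : x ∈ delta i j B ∩ C := by
        rw [hδ]
        exact mem_inter.2 ⟨mem_insert_of_mem (mem_erase.2 ⟨hxj, hx.1⟩), hx.2⟩
      simp [hempty] at this
    obtain ⟨y, hy⟩ := hBint C hC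
    have hjC : j ∈ C := by
      have := hsub y hy; subst this; exact (mem_inter.1 hy).2
    -- C must be of "type 1"
    have hC1 : C ∈ 𝒜 ∧ delta i j C ∈ 𝒜 := by
      rw [compFam, mem_union] at hC
      rcases hC with hC | hC
      · exact (mem_filter.1 hC).imp id id |>.imp_left id |> fun h => ⟨(mem_filter.1 hC).1, (mem_filter.1 hC).2⟩
      · simp only [mem_image, mem_filter] at hC
        obtain ⟨A, ⟨hA, hdA⟩, rfl⟩ := hC
        by_cases hA2 : j ∈ A ∧ i ∉ A
        · exfalso
          apply hiC
          rw [delta, if_pos hA2]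
          exact mem_insert_self _ _
        · rw [delta, if_neg hA2] at hdA ⊢
          exact absurd hA hdA
    have hδC : delta i j C ∈ compFam i j 𝒜 := by
      rw [compFam, mem_union]
      left
      rw [mem_filter, delta_idem hij]
      exact ⟨hC1.2, hC1.2⟩
    obtain ⟨z, hz⟩ := hBint _ hδC
    rw [mem_inter, delta, if_pos ⟨hjC, hiC⟩, mem_insert, mem_erase] at hz
    obtain ⟨hzB, hz2⟩ := hz
    rcases hz2 with rfl | ⟨hzj, hzC⟩
    · exact hc.2 hzB
    · exact hzj (hsub z (mem_inter.2 ⟨hzB, hzC⟩))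
  · rw [delta, if_neg hc]
    exact hBint
end
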